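/- Let N = P^u(ℤ_p), viewed inside GL_n(ℚ_p). For every block boundary i = D(j) (1 ≤ j ≤ t), the double coset N t_i N decomposes as the disjoint union N t_i N = ⨆_{B'} u(B')·t_i·N, where B' runs over all i×(n−i) matrices with entries in {0, 1, …, p−1}. -/

import Mathlib

/-!
STATEMENT 7: Let N = P^u(ℤ_p), viewed inside GL_n(ℚ_p). For every block boundary
i = D(j) (1 ≤ j ≤ t), the double coset N t_i N decomposes as the disjoint union
N t_i N = ⨆_{B'} u(B')·t_i·N, where B' runs over all i×(n−i) matrices with entries in
{0, 1, …, p−1}.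
-/

open Matrix

noncomputable section
namespace PIw

/-- Partial sums of the partition: `Dsum nn j = n_1 + ⋯ + n_j` (`nn` is 0-indexed). -/
def Dsum {t : ℕ} (nn : Fin t → ℕ) (j : ℕ) : ℕ :=
  ∑ i ∈ Finset.range j, if h : i < t then nn ⟨i, h⟩ else 0

/-- Index (0-indexed) of the block containing position `k`. -/
def blkOf {t : ℕ} (nn : Fin t → ℕ) (k : ℕ) : ℕ :=
  ((Finset.range t).filter fun j => Dsum nn (j + 1) ≤ k).card

/-- The block function on `Fin n`. -/
def bfun {t : ℕ} (nn : Fin t → ℕ) : Fin (Dsum nn t) → ℕ := fun k => blkOf nn (k : ℕ)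

/-- Block upper triangular (entries strictly below the diagonal blocks vanish). -/
def IsBlockUpper {t : ℕ} (nn : Fin t → ℕ) {R : Type*} [CommRing R]
    (M : Matrix (Fin (Dsum nn t)) (Fin (Dsum nn t)) R) : Prop :=
  M.BlockTriangular (bfun nn)

/-- Block upper triangular with identity diagonal blocks: membership in `P^u(R)`. -/
def IsBlockUnipotent {t : ℕ} (nn : Fin t → ℕ) {R : Type*} [CommRing R]
    (M : Matrix (Fin (Dsum nn t)) (Fin (Dsum nn t)) R) : Prop :=
  IsBlockUpper nn M ∧
    ∀ k l, bfun nn k = bfun nn l → M k l = if k = l then 1 else 0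

variable (p : ℕ) [Fact p.Prime]

/-- Coefficient-wise inclusion `ℤ_p → ℚ_p` on matrices. -/
def toQ {N : ℕ} (M : Matrix (Fin N) (Fin N) ℤ_[p]) : Matrix (Fin N) (Fin N) ℚ_[p] :=
  M.map (fun x => (x : ℚ_[p]))

/-- The matrix `t_i = diag(p·1_i, 1_{n-i})` in `GL_n(ℚ_p)`. -/
def tMat (N i : ℕ) : Matrix (Fin N) (Fin N) ℚ_[p] :=
  Matrix.diagonal fun k => if (k : ℕ) < i then (p : ℚ_[p]) else 1

/-- The unipotent matrix `u(B) = (1_i, B; 0, 1_{n-i})`, where `B` is an `i × (n-i)`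
matrix of natural numbers (viewed in `ℚ_p`). -/
def uMat (N i : ℕ) (B : Matrix (Fin i) (Fin (N - i)) ℕ) :
    Matrix (Fin N) (Fin N) ℚ_[p] := fun k l =>
  if h : (k : ℕ) < i ∧ i ≤ (l : ℕ) then
    (B ⟨(k : ℕ), h.1⟩ ⟨(l : ℕ) - i, Nat.sub_lt_sub_right h.2 l.isLt⟩ : ℚ_[p])
  else if k = l then 1 else 0

/-!
For `c ∈ N` one has `t_i c = c' t_i`, where `c' ∈ N` is `c` with its upper-right `i × (n - i)`
corner multiplied by `p`. Hence `N t_i N = N t_i` and `u(B') t_i N = u(B') K t_i`, where `K ⊆ N`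
consists of the matrices whose corner is divisible by `p`. Every `d ∈ N` factors as `(1 + E) g`
with `E` supported in the corner and `g ∈ N` vanishing there; splitting `E = E₀ + p F` into
digits `E₀` with entries in `{0, …, p - 1}` gives `d ∈ u(E₀) K`. Conversely,
`u(B₁) t_i c₁ = u(B₂) t_i c₂` gives `u(B₁ - B₂) t_i = t_i c₂ c₁⁻¹`, whose corner shows
`B₁ ≡ B₂ (mod p)`.
-/

lemma _root_.PadicInt.exists_digit (z : ℤ_[p]) : ∃ a < p, ∃ w : ℤ_[p], z = a + p * w := by
  have h := PadicInt.sub_zmodRepr_mem z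
  rw [PadicInt.maximalIdeal_eq_span_p, Ideal.mem_span_singleton] at h
  obtain ⟨w, hw⟩ := h
  exact ⟨z.zmodRepr, PadicInt.zmodRepr_lt_p z, w, by rw [← hw, add_sub_cancel]⟩

lemma _root_.PadicInt.natCast_eq_of_dvd_sub {a b : ℕ} (ha : a < p) (hb : b < p)
    (h : (p : ℤ_[p]) ∣ (a : ℤ_[p]) - b) : a = b := by
  have hz : (p : ℤ) ∣ (b : ℤ) - a := by
    rw [← dvd_neg, neg_sub, ← PadicInt.norm_int_lt_one_iff_dvd, PadicInt.norm_lt_one_iff_dvd]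
    exact_mod_cast h
  exact (Nat.modEq_iff_dvd.2 hz).eq_of_lt_of_lt ha hb

lemma Dsum_mono {t : ℕ} (nn : Fin t → ℕ) : Monotone (Dsum nn) := fun _ _ h =>
  Finset.sum_le_sum_of_subset (Finset.range_subset_range.2 h)

section Blocks

variable {t : ℕ} (nn : Fin t → ℕ)

lemma blkOf_le_of_lt_Dsum {k m : ℕ} (h : k < Dsum nn (m + 1)) : blkOf nn k ≤ m :=
  calc blkOf nn k ≤ (Finset.range m).card := Finset.card_le_card fun x hx => by
        simp only [Finset.mem_filter, Finset.mem_range] at hx ⊢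
        by_contra hxm
        have := Dsum_mono nn (show m + 1 ≤ x + 1 by omega)
        omega
    _ = m := Finset.card_range m

lemma le_blkOf_of_Dsum_le {k m : ℕ} (hm : m ≤ t) (h : Dsum nn m ≤ k) : m ≤ blkOf nn k :=
  calc m = (Finset.range m).card := (Finset.card_range m).symm
    _ ≤ blkOf nn k := Finset.card_le_card fun x hx => by
        simp only [Finset.mem_filter, Finset.mem_range] at hx ⊢
        exact ⟨by omega, (Dsum_mono nn (show x + 1 ≤ m by omega)).trans h⟩

def IsBlockBoundary (i : ℕ) : Prop :=
  ∀ k l : Fin (Dsum nn t), (k : ℕ) < i → i ≤ (l : ℕ) → bfun nn k < bfun nn l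

lemma isBlockBoundary_Dsum (j : Fin t) : IsBlockBoundary nn (Dsum nn (j + 1)) :=
  fun _ _ hk hl => (blkOf_le_of_lt_Dsum nn hk).trans_lt (le_blkOf_of_Dsum_le nn j.isLt hl)

variable {nn} {R : Type*} [CommRing R] {i : ℕ} {M M' : Matrix (Fin (Dsum nn t)) (Fin (Dsum nn t)) R}

lemma IsBlockBoundary.apply_eq_zero (hi : IsBlockBoundary nn i) (hM : IsBlockUpper nn M) :
    ∀ k l : Fin (Dsum nn t), (l : ℕ) < i → i ≤ (k : ℕ) → M k l = 0 :=
  fun k l hl hk => hM (hi l k hl hk)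

lemma isBlockUnipotent_one :
    IsBlockUnipotent nn (1 : Matrix (Fin (Dsum nn t)) (Fin (Dsum nn t)) R) :=
  ⟨Matrix.blockTriangular_one, fun _ _ _ => Matrix.one_apply⟩

lemma IsBlockUnipotent.mul_apply_of_bfun_eq (hM : IsBlockUpper nn M)
    (hM' : IsBlockUnipotent nn M') {k l : Fin (Dsum nn t)} (hkl : bfun nn k = bfun nn l) :
    (M * M') k l = M k l := by
  rw [Matrix.mul_apply, Finset.sum_eq_single l]
  · rw [hM'.2 l l rfl, if_pos rfl, mul_one]
  · intro m _ hml
    rcases lt_trichotomy (bfun nn m) (bfun nn l) with h | h | h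
    · rw [hM (hkl ▸ h), zero_mul]
    · rw [hM'.2 m l h, if_neg hml, mul_zero]
    · rw [hM'.1 h, mul_zero]
  · simp

lemma IsBlockUnipotent.mul (hM : IsBlockUnipotent nn M) (hM' : IsBlockUnipotent nn M') :
    IsBlockUnipotent nn (M * M') :=
  ⟨hM.1.mul hM'.1, fun k l hkl => by rw [hM'.mul_apply_of_bfun_eq hM.1 hkl, hM.2 k l hkl]⟩

lemma IsBlockUnipotent.det_eq_one (hM : IsBlockUnipotent nn M) : M.det = 1 := by
  classical
  rw [hM.1.det]
  refine Finset.prod_eq_one fun a _ => ?_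
  have : M.toSquareBlock (bfun nn) a = 1 := by
    ext k l
    simp [Matrix.toSquareBlock_def, hM.2 k l (k.2.trans l.2.symm), Matrix.one_apply,
      Subtype.ext_iff]
  rw [this, Matrix.det_one]

lemma IsBlockUnipotent.isUnit_det (hM : IsBlockUnipotent nn M) : IsUnit M.det :=
  hM.det_eq_one ▸ isUnit_one

lemma IsBlockUnipotent.inv (hM : IsBlockUnipotent nn M) : IsBlockUnipotent nn M⁻¹ := by
  have := M.invertibleOfIsUnitDet hM.isUnit_det
  have hup : IsBlockUpper nn M⁻¹ := Matrix.blockTriangular_inv_of_blockTriangular hM.1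
  refine ⟨hup, fun k l hkl => ?_⟩
  rw [← hM.mul_apply_of_bfun_eq hup hkl, M.nonsing_inv_mul hM.isUnit_det, Matrix.one_apply]

lemma IsBlockUnipotent.of_eq_off_corner (hi : IsBlockBoundary nn i) (hM : IsBlockUnipotent nn M)
    (h : ∀ k l : Fin (Dsum nn t), ¬((k : ℕ) < i ∧ i ≤ (l : ℕ)) → M' k l = M k l) :
    IsBlockUnipotent nn M' := by
  have off : ∀ {k l}, bfun nn l ≤ bfun nn k → M' k l = M k l := fun hkl =>
    h _ _ fun hc => absurd (hi _ _ hc.1 hc.2) (not_lt.2 hkl)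
  exact ⟨fun k l hkl => (off hkl.le).trans (hM.1 hkl),
    fun k l hkl => (off hkl.ge).trans (hM.2 k l hkl)⟩

end Blocks

section Corner

variable {R : Type*} {N i : ℕ}

def cornerBlock (M : Matrix (Fin N) (Fin N) R) : Matrix (Fin i) (Fin (N - i)) R :=
  Matrix.of fun k l => M ⟨k, by have := l.isLt; omega⟩ ⟨i + l, by omega⟩

def cornerEmb [Zero R] (B : Matrix (Fin i) (Fin (N - i)) R) : Matrix (Fin N) (Fin N) R :=
  Matrix.of fun k l => if h : (k : ℕ) < i ∧ i ≤ (l : ℕ) then B ⟨k, h.1⟩ ⟨l - i, by omega⟩ else 0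

def IsCornerSupported [Zero R] (i : ℕ) (S : Matrix (Fin N) (Fin N) R) : Prop :=
  ∀ k l : Fin N, ¬((k : ℕ) < i ∧ i ≤ (l : ℕ)) → S k l = 0

lemma isCornerSupported_cornerEmb [Zero R] (B : Matrix (Fin i) (Fin (N - i)) R) :
    IsCornerSupported i (cornerEmb B) := fun _ _ h => dif_neg h

lemma IsCornerSupported.cornerEmb_cornerBlock [Zero R] {S : Matrix (Fin N) (Fin N) R}
    (hS : IsCornerSupported i S) : cornerEmb (cornerBlock (i := i) S) = S := by
  ext k l
  by_cases h : (k : ℕ) < i ∧ i ≤ (l : ℕ)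
  · simp only [cornerEmb, cornerBlock, Matrix.of_apply, dif_pos h]
    congr 2
    omega
  · rw [isCornerSupported_cornerEmb _ k l h, hS k l h]

lemma cornerEmb_add [AddZeroClass R] (B B' : Matrix (Fin i) (Fin (N - i)) R) :
    cornerEmb (B + B') = cornerEmb B + cornerEmb B' := by
  ext k l
  by_cases h : (k : ℕ) < i ∧ i ≤ (l : ℕ) <;> simp [cornerEmb, h]

lemma cornerEmb_smul [MulZeroClass R] (a : R) (B : Matrix (Fin i) (Fin (N - i)) R) :
    cornerEmb (a • B) = a • cornerEmb B := by
  ext k l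
  by_cases h : (k : ℕ) < i ∧ i ≤ (l : ℕ) <;> simp [cornerEmb, h]

variable [CommRing R]

lemma IsCornerSupported.mul_eq_zero {S S' : Matrix (Fin N) (Fin N) R}
    (hS : IsCornerSupported i S) (hS' : IsCornerSupported i S') : S * S' = 0 := by
  ext k l
  rw [Matrix.mul_apply, Matrix.zero_apply]
  refine Finset.sum_eq_zero fun m _ => ?_
  by_cases hm : (m : ℕ) < i
  · rw [hS k m (by omega), zero_mul]
  · rw [hS' m l (by omega), mul_zero]

lemma IsCornerSupported.one_sub_mul_one_add {S S' : Matrix (Fin N) (Fin N) R}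
    (hS : IsCornerSupported i S) (hS' : IsCornerSupported i S') :
    (1 - S) * (1 + S') = 1 + S' - S := by
  rw [sub_mul, one_mul, mul_add, mul_one, hS.mul_eq_zero hS', add_zero]

lemma IsCornerSupported.mul_of_lowerLeft_eq_zero {S M : Matrix (Fin N) (Fin N) R}
    (hS : IsCornerSupported i S) (hM : ∀ k l : Fin N, (l : ℕ) < i → i ≤ (k : ℕ) → M k l = 0) :
    IsCornerSupported i (S * M) := by
  intro k l hkl
  rw [Matrix.mul_apply]
  refine Finset.sum_eq_zero fun m _ => ?_
  by_cases hc : (k : ℕ) < i ∧ i ≤ (m : ℕ)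
  · rw [hM m l (by omega) hc.2, mul_zero]
  · rw [hS k m hc, zero_mul]

/-- For `a = p` this is conjugation by `t_i` on block upper triangular matrices. -/
def cornerScale (a : R) (i : ℕ) (M : Matrix (Fin N) (Fin N) R) : Matrix (Fin N) (Fin N) R :=
  Matrix.of fun k l => if (k : ℕ) < i ∧ i ≤ (l : ℕ) then a * M k l else M k l

lemma cornerScale_add_of_isCornerSupported (a : R) {g S : Matrix (Fin N) (Fin N) R}
    (hg : ∀ k l : Fin N, (k : ℕ) < i → i ≤ (l : ℕ) → g k l = 0) (hS : IsCornerSupported i S) :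
    cornerScale a i (g + S) = g + a • S := by
  ext k l
  by_cases h : (k : ℕ) < i ∧ i ≤ (l : ℕ)
  · simp [cornerScale, h, hg k l h.1 h.2]
  · simp [cornerScale, h, hS k l h]

end Corner

lemma exists_cornerEmb_digits_add_smul {N i : ℕ} {S : Matrix (Fin N) (Fin N) ℤ_[p]}
    (hS : IsCornerSupported i S) :
    ∃ B : Matrix (Fin i) (Fin (N - i)) ℕ, (∀ k l, B k l < p) ∧ ∃ F, IsCornerSupported i F ∧
      S = cornerEmb (B.map (↑)) + (p : ℤ_[p]) • F := by
  choose a ha w hw using PadicInt.exists_digit p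
  refine ⟨(cornerBlock S).map a, fun _ _ => ha _, cornerEmb ((cornerBlock S).map w),
    isCornerSupported_cornerEmb _, ?_⟩
  conv_lhs => rw [← hS.cornerEmb_cornerBlock]
  rw [← cornerEmb_smul, ← cornerEmb_add]
  congr 1
  ext k l
  exact hw _

section Decomposition

variable {t : ℕ} {nn : Fin t → ℕ} {R : Type*} [CommRing R] {i : ℕ}

lemma isBlockUnipotent_one_add (hi : IsBlockBoundary nn i)
    {S : Matrix (Fin (Dsum nn t)) (Fin (Dsum nn t)) R} (hS : IsCornerSupported i S) :
    IsBlockUnipotent nn (1 + S) :=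
  isBlockUnipotent_one.of_eq_off_corner hi fun k l h => by
    rw [Matrix.add_apply, hS k l h, add_zero]

lemma isBlockUnipotent_cornerScale (hi : IsBlockBoundary nn i)
    {M : Matrix (Fin (Dsum nn t)) (Fin (Dsum nn t)) R} (hM : IsBlockUnipotent nn M) (a : R) :
    IsBlockUnipotent nn (cornerScale a i M) :=
  hM.of_eq_off_corner hi fun _ _ h => if_neg h

lemma IsBlockUnipotent.exists_eq_one_add_mul (hi : IsBlockBoundary nn i)
    {d : Matrix (Fin (Dsum nn t)) (Fin (Dsum nn t)) R} (hd : IsBlockUnipotent nn d) :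
    ∃ E g, IsCornerSupported i E ∧ IsBlockUnipotent nn g ∧
      (∀ k l : Fin (Dsum nn t), (k : ℕ) < i → i ≤ (l : ℕ) → g k l = 0) ∧ d = (1 + E) * g := by
  set g : Matrix (Fin (Dsum nn t)) (Fin (Dsum nn t)) R :=
    Matrix.of fun k l => if (k : ℕ) < i ∧ i ≤ (l : ℕ) then 0 else d k l
  have hg : IsBlockUnipotent nn g := hd.of_eq_off_corner hi fun _ _ h => if_neg h
  have hdg : IsCornerSupported i (d - g) := fun _ _ h => by simp [g, h]
  refine ⟨(d - g) * g⁻¹, g, hdg.mul_of_lowerLeft_eq_zero (hi.apply_eq_zero hg.inv.1), hg,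
    fun _ _ hk hl => if_pos ⟨hk, hl⟩, ?_⟩
  rw [add_mul, one_mul, mul_assoc, g.nonsing_inv_mul hg.isUnit_det, mul_one, add_sub_cancel]

lemma IsBlockUnipotent.exists_digits_mul_cornerScale (hi : IsBlockBoundary nn i)
    {d : Matrix (Fin (Dsum nn t)) (Fin (Dsum nn t)) ℤ_[p]} (hd : IsBlockUnipotent nn d) :
    ∃ B : Matrix (Fin i) (Fin (Dsum nn t - i)) ℕ, (∀ k l, B k l < p) ∧ ∃ c, IsBlockUnipotent nn c ∧
      d = (1 + cornerEmb (B.map (↑))) * cornerScale (p : ℤ_[p]) i c := by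
  obtain ⟨E, g, hE, hg, hg0, rfl⟩ := hd.exists_eq_one_add_mul hi
  obtain ⟨B, hB, F, hF, rfl⟩ := exists_cornerEmb_digits_add_smul p hE
  have hFg : IsCornerSupported i (F * g) := hF.mul_of_lowerLeft_eq_zero (hi.apply_eq_zero hg.1)
  have hz : cornerEmb (B.map ((↑) : ℕ → ℤ_[p])) * F = 0 :=
    (isCornerSupported_cornerEmb _).mul_eq_zero hF
  refine ⟨B, hB, (1 + F) * g, (isBlockUnipotent_one_add hi hF).mul hg, ?_⟩
  rw [add_mul (1 : Matrix _ _ ℤ_[p]) F g, one_mul, cornerScale_add_of_isCornerSupported _ hg0 hFg]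
  simp only [add_mul, mul_add, one_mul, smul_mul_assoc, mul_smul_comm, ← mul_assoc, hz, add_zero]
  abel

end Decomposition

section Embedding

variable {N i : ℕ}

lemma toQ_eq_mapMatrix (M : Matrix (Fin N) (Fin N) ℤ_[p]) :
    toQ p M = (PadicInt.Coe.ringHom (p := p)).mapMatrix M := rfl

lemma toQ_mul (M M' : Matrix (Fin N) (Fin N) ℤ_[p]) :
    toQ p (M * M') = toQ p M * toQ p M' := by
  simp only [toQ_eq_mapMatrix, map_mul]

lemma toQ_one : toQ p (1 : Matrix (Fin N) (Fin N) ℤ_[p]) = 1 := by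
  simp only [toQ_eq_mapMatrix, map_one]

lemma toQ_injective : Function.Injective (toQ p (N := N)) :=
  Matrix.map_injective Subtype.coe_injective

lemma toQ_one_add_cornerEmb (B : Matrix (Fin i) (Fin (N - i)) ℕ) :
    toQ p (1 + cornerEmb (B.map (↑))) = uMat p N i B := by
  ext k l
  by_cases h : (k : ℕ) < i ∧ i ≤ (l : ℕ)
  · have hkl : k ≠ l := fun e => by omega
    simp [toQ, uMat, cornerEmb, h, Matrix.one_apply_ne hkl]
  · simp only [toQ, uMat, cornerEmb, h, Matrix.map_apply, Matrix.add_apply, Matrix.one_apply,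
      Matrix.of_apply, dif_neg, not_false_eq_true, add_zero]
    split_ifs <;> simp

lemma isUnit_tMat : IsUnit (tMat p N i) := by
  refine Matrix.isUnit_diagonal.2 (Pi.isUnit_iff.2 fun k => ?_)
  split_ifs
  · exact isUnit_iff_ne_zero.2 (Nat.cast_ne_zero.2 (Fact.out : p.Prime).ne_zero)
  · exact isUnit_one

lemma tMat_mul_toQ {c : Matrix (Fin N) (Fin N) ℤ_[p]}
    (hc : ∀ k l : Fin N, (l : ℕ) < i → i ≤ (k : ℕ) → c k l = 0) :
    tMat p N i * toQ p c = toQ p (cornerScale (p : ℤ_[p]) i c) * tMat p N i := by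
  ext k l
  simp only [tMat, Matrix.diagonal_mul, Matrix.mul_diagonal, toQ, cornerScale, Matrix.map_apply,
    Matrix.of_apply]
  by_cases hk : (k : ℕ) < i <;> by_cases hl : (l : ℕ) < i
  · simp [hk, hl, not_le.2 hl, mul_comm]
  · simp [hk, hl, not_lt.1 hl]
  · simp [hk, hl, hc k l hl (by omega)]
  · simp [hk, hl]

end Embedding

lemma eq_of_uMat_mul_tMat_mul_eq {t : ℕ} {nn : Fin t → ℕ} {i : ℕ} (hi : IsBlockBoundary nn i)
    {B₁ B₂ : Matrix (Fin i) (Fin (Dsum nn t - i)) ℕ} (hB₁ : ∀ k l, B₁ k l < p)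
    (hB₂ : ∀ k l, B₂ k l < p) {c₁ c₂ : Matrix (Fin (Dsum nn t)) (Fin (Dsum nn t)) ℤ_[p]}
    (hc₁ : IsBlockUnipotent nn c₁) (hc₂ : IsBlockUnipotent nn c₂)
    (h : uMat p _ i B₁ * tMat p _ i * toQ p c₁ = uMat p _ i B₂ * tMat p _ i * toQ p c₂) :
    B₁ = B₂ := by
  set E₁ : Matrix _ _ ℤ_[p] := cornerEmb (B₁.map (↑))
  set E₂ : Matrix _ _ ℤ_[p] := cornerEmb (B₂.map (↑))
  have hE₂ : IsCornerSupported i E₂ := isCornerSupported_cornerEmb _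
  have hc : IsBlockUnipotent nn (c₂ * c₁⁻¹) := hc₂.mul hc₁.inv
  have key : 1 + E₁ - E₂ = cornerScale (p : ℤ_[p]) i (c₂ * c₁⁻¹) := by
    refine toQ_injective p ((isUnit_tMat p (i := i)).mul_left_injective ?_)
    calc toQ p (1 + E₁ - E₂) * tMat p _ i
        = toQ p (1 - E₂) * (uMat p _ i B₁ * tMat p _ i * toQ p c₁) * toQ p c₁⁻¹ := by
          rw [mul_assoc _ _ (toQ p c₁⁻¹), mul_assoc _ (toQ p c₁), ← toQ_mul,
            c₁.mul_nonsing_inv hc₁.isUnit_det, toQ_one, mul_one, ← toQ_one_add_cornerEmb,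
            ← mul_assoc, ← toQ_mul, hE₂.one_sub_mul_one_add (isCornerSupported_cornerEmb _)]
      _ = toQ p (1 - E₂) * (uMat p _ i B₂ * tMat p _ i * toQ p c₂) * toQ p c₁⁻¹ := by rw [h]
      _ = tMat p _ i * toQ p (c₂ * c₁⁻¹) := by
          rw [← toQ_one_add_cornerEmb, ← mul_assoc, ← mul_assoc, ← toQ_mul,
            hE₂.one_sub_mul_one_add hE₂, add_sub_cancel_right, toQ_one, one_mul, mul_assoc,
            ← toQ_mul]
      _ = _ := tMat_mul_toQ p (hi.apply_eq_zero hc.1)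
  ext k l
  have hne : (k : ℕ) ≠ i + l := by omega
  have hkl := congrArg (fun M => cornerBlock (i := i) M k l) key
  simp [cornerBlock, cornerScale, E₁, E₂, cornerEmb, Matrix.one_apply, hne] at hkl
  exact PadicInt.natCast_eq_of_dvd_sub p (hB₁ k l) (hB₂ k l) ⟨_, hkl⟩

theorem unipotent_double_coset_decomposition {t : ℕ} (nn : Fin t → ℕ)
    (j : Fin t) :
    -- the double coset is the union of the cosets `u(B')·t_i·N`
    (∀ x : Matrix (Fin (Dsum nn t)) (Fin (Dsum nn t)) ℚ_[p],
      (∃ a b : Matrix (Fin (Dsum nn t)) (Fin (Dsum nn t)) ℤ_[p],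
          IsBlockUnipotent nn a ∧ IsBlockUnipotent nn b ∧
          x = toQ p a * tMat p (Dsum nn t) (Dsum nn ((j : ℕ) + 1)) * toQ p b) ↔
        (∃ (B' : Matrix (Fin (Dsum nn ((j : ℕ) + 1)))
              (Fin (Dsum nn t - Dsum nn ((j : ℕ) + 1))) ℕ),
          (∀ k l, B' k l < p) ∧
          ∃ c : Matrix (Fin (Dsum nn t)) (Fin (Dsum nn t)) ℤ_[p],
            IsBlockUnipotent nn c ∧
            x = uMat p (Dsum nn t) (Dsum nn ((j : ℕ) + 1)) B' *
              tMat p (Dsum nn t) (Dsum nn ((j : ℕ) + 1)) * toQ p c)) ∧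
    -- disjointness of the union
    (∀ (B₁ B₂ : Matrix (Fin (Dsum nn ((j : ℕ) + 1)))
        (Fin (Dsum nn t - Dsum nn ((j : ℕ) + 1))) ℕ),
      (∀ k l, B₁ k l < p) → (∀ k l, B₂ k l < p) →
      ∀ c₁ c₂ : Matrix (Fin (Dsum nn t)) (Fin (Dsum nn t)) ℤ_[p],
        IsBlockUnipotent nn c₁ → IsBlockUnipotent nn c₂ →
        uMat p (Dsum nn t) (Dsum nn ((j : ℕ) + 1)) B₁ *
            tMat p (Dsum nn t) (Dsum nn ((j : ℕ) + 1)) * toQ p c₁ =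
          uMat p (Dsum nn t) (Dsum nn ((j : ℕ) + 1)) B₂ *
            tMat p (Dsum nn t) (Dsum nn ((j : ℕ) + 1)) * toQ p c₂ →
        B₁ = B₂) := by
  have hi := isBlockBoundary_Dsum nn j
  refine ⟨fun x => ⟨?_, ?_⟩, fun _ _ hB₁ hB₂ _ _ hc₁ hc₂ h =>
    eq_of_uMat_mul_tMat_mul_eq p hi hB₁ hB₂ hc₁ hc₂ h⟩
  · rintro ⟨a, b, ha, hb, rfl⟩
    obtain ⟨B, hB, c, hc, hd⟩ :=
      (ha.mul (isBlockUnipotent_cornerScale hi hb _)).exists_digits_mul_cornerScale p hi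
    refine ⟨B, hB, c, hc, ?_⟩
    rw [mul_assoc, tMat_mul_toQ p (hi.apply_eq_zero hb.1), ← mul_assoc, ← toQ_mul, hd, toQ_mul,
      toQ_one_add_cornerEmb, mul_assoc, ← tMat_mul_toQ p (hi.apply_eq_zero hc.1), mul_assoc]
  · rintro ⟨B, -, c, hc, rfl⟩
    exact ⟨_, c, isBlockUnipotent_one_add hi (isCornerSupported_cornerEmb _), hc,
      by rw [toQ_one_add_cornerEmb]⟩

end PIw
end
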